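/- Let p ∈ ℝ^d and r = (r_1,…,r_d) ∈ ℝ_{>0}^d, let Δ := ∏_{i=1}^d [p_i−r_i, p_i+r_i] ⊂ ℝ^d, and let μ_Δ denote the Lebesgue measure restricted to Δ. For a ∈ ℝ and ρ > 0, let λ_n(a,ρ) denote the smallest eigenvalue of the (n+1)×(n+1) Hankel matrix ( ∫_{a−ρ}^{a+ρ} t^{j+k} dt )_{j,k=0,…,n}. Then for every n ∈ ℤ_{≥0}: Λ_n(μ_Δ) ≥ ∏_{i=1}^d λ_n(p_i, r_i). -/

import Mathlib

open MeasureTheory Complex Filter Matrix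
open scoped BigOperators ENNReal Topology

noncomputable section

namespace PFA

/-- The canonical inclusion of `ℝ^d` into `ℂ^d`. -/
def cpx {d : ℕ} (x : Fin d → ℝ) : Fin d → ℂ := fun i => (x i : ℂ)

/-- Euclidean norm on `ℂ^d`. -/
def enorm' {d : ℕ} (z : Fin d → ℂ) : ℝ := Real.sqrt (∑ i, ‖z i‖ ^ 2)

/-- An absolutely convex subset of `ℂ^d`. -/
def AbsConvex {d : ℕ} (K : Set (Fin d → ℂ)) : Prop :=
  ∀ x ∈ K, ∀ y ∈ K, ∀ a b : ℂ, ‖a‖ + ‖b‖ ≤ 1 → a • x + b • y ∈ K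

/-- The (topological) support of a Borel measure. -/
def msupport {X : Type*} [TopologicalSpace X] [MeasurableSpace X] (μ : Measure X) : Set X :=
  {x | ∀ U : Set X, IsOpen U → x ∈ U → 0 < μ U}

/-- translate of a set -/
def transSet {d : ℕ} (p : Fin d → ℂ) (K : Set (Fin d → ℂ)) : Set (Fin d → ℂ) :=
  (fun z => p + z) '' K

/-- multi-indices of degree at most `n` -/
abbrev MIdx (d n : ℕ) := {α : Fin d → ℕ // ∑ i, α i ≤ n}

instance instFintypeMIdx (d n : ℕ) : Fintype (MIdx d n) :=
  Fintype.subtype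
    ((Fintype.piFinset fun _ : Fin d => Finset.range (n + 1)).filter fun α => ∑ i, α i ≤ n)
    (by
      intro α
      simp only [Finset.mem_filter, Fintype.mem_piFinset, Finset.mem_range, Nat.lt_succ_iff]
      exact ⟨fun h => h.2, fun h =>
        ⟨fun i => le_trans (Finset.single_le_sum (fun j _ => Nat.zero_le (α j))
          (Finset.mem_univ i)) h, h⟩⟩)

/-- inclusion of multi-index sets -/
def midxIncl {d m n : ℕ} (h : m ≤ n) (a : MIdx d m) : MIdx d n := ⟨a.1, a.2.trans h⟩

/-- moment matrix `D_n(μ)` -/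
def momentMatrix (d n : ℕ) (μ : Measure (Fin d → ℝ)) : Matrix (MIdx d n) (MIdx d n) ℝ :=
  Matrix.of fun a b => ∫ x, ∏ i, x i ^ (a.1 i + b.1 i) ∂μ

/-- smallest eigenvalue of a real matrix -/
def minEig {ι : Type*} [Fintype ι] (M : Matrix ι ι ℝ) : ℝ :=
  sInf {t : ℝ | ∃ v : ι → ℝ, v ≠ 0 ∧ M.mulVec v = t • v}

/-- ℓ²→ℓ² operator norm of a matrix -/
def matOpNorm {𝕜 : Type*} [RCLike 𝕜] {ι κ : Type*} [Fintype ι] [Fintype κ]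
    (M : Matrix ι κ 𝕜) : ℝ :=
  sSup {t : ℝ | ∃ v : κ → 𝕜, (∑ j, ‖v j‖ ^ 2) ≤ 1 ∧
    t = Real.sqrt (∑ i, ‖∑ j, M i j * v j‖ ^ 2)}

/-- Frobenius norm of a matrix -/
def matFrobNorm {𝕜 : Type*} [RCLike 𝕜] {ι κ : Type*} [Fintype ι] [Fintype κ]
    (M : Matrix ι κ 𝕜) : ℝ :=
  Real.sqrt (∑ i, ∑ j, ‖M i j‖ ^ 2)

/-- the four Penrose conditions characterizing the Moore–Penrose pseudo-inverse -/
def IsMoorePenrose {ι κ : Type*} [Fintype ι] [Fintype κ]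
    (A : Matrix ι κ ℂ) (X : Matrix κ ι ℂ) : Prop :=
  A * X * A = A ∧ X * A * X = X ∧ (A * X)ᴴ = A * X ∧ (X * A)ᴴ = X * A

/-- complex partial derivative in the `k`-th coordinate -/
def pderivAt {d : ℕ} (k : Fin d) (g : (Fin d → ℂ) → ℂ) : (Fin d → ℂ) → ℂ :=
  fun z => fderiv ℂ g z (Pi.single k 1)

/-- iterated complex partial derivative `∂^γ` -/
def mpderiv {d : ℕ} (γ : Fin d → ℕ) (g : (Fin d → ℂ) → ℂ) : (Fin d → ℂ) → ℂ :=
  ((List.finRange d).map fun k => (pderivAt k)^[γ k]).foldr (fun F h => F h) g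

/-- the jet functional `ν_{q,κ}` -/
def jetFun {d : ℕ} (q : Fin d → ℂ) (κ : Fin d → ℕ) (h : (Fin d → ℂ) → ℂ) : ℂ :=
  ((Real.exp (-(∑ i, ‖q i‖ ^ 2) / 2) / Real.sqrt (∏ i, (κ i).factorial) : ℝ) : ℂ) *
    ∑ γ ∈ Fintype.piFinset fun i => Finset.range (κ i + 1),
      (∏ i, ((κ i).choose (γ i) : ℂ)) *
        (∏ i, (-(starRingEnd ℂ) (q i)) ^ (κ i - γ i)) * mpderiv γ h q

/-- the functions `u_{p,α}` (also used for `v_{q,β}`) -/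
def uFn {d : ℕ} (p : Fin d → ℂ) (α : Fin d → ℕ) (z : Fin d → ℂ) : ℂ :=
  ((Real.exp (-(∑ i, ‖p i‖ ^ 2) / 2) / Real.sqrt (∏ i, (α i).factorial) : ℝ) : ℂ) *
    (∏ i, (z i - p i) ^ (α i)) * Complex.exp (∑ i, z i * (starRingEnd ℂ) (p i))

/-- sample matrix `U_{p,n,Z}` (resp. `V_{q,n,W}`) -/
def sampMat {d N : ℕ} (n : ℕ) (p : Fin d → ℂ) (Z : Fin N → Fin d → ℂ) :
    Matrix (Fin N) (MIdx d n) ℂ :=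
  Matrix.of fun i a => uFn p a.1 (Z i)

/-- Data matrix `Ĉ_{m,n,Z}`, given a Moore–Penrose pseudo-inverse `X` of `U_{p,n,Z}ᴴ`:
the leftmost block of `V_{q,m,W}ᴴ * X`. -/
def dataMat {d r N : ℕ} {m n : ℕ} (hmn : m ≤ n) (q : Fin r → ℂ)
    (W : Fin N → Fin r → ℂ) (X : Matrix (Fin N) (MIdx d n) ℂ) :
    Matrix (MIdx r m) (MIdx d m) ℂ :=
  ((sampMat m q W)ᴴ * X).submatrix id (midxIncl hmn)

/-- jet representation matrix of the push-forward of `f` at `p` -/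
def IsJetMatrix {d r : ℕ} (m : ℕ) (p : Fin d → ℂ) (f : (Fin d → ℂ) → Fin r → ℂ)
    (C : Matrix (MIdx r m) (MIdx d m) ℂ) : Prop :=
  ∀ h : MvPolynomial (Fin r) ℂ, ∀ a : MIdx d m,
    jetFun p a.1 (fun z => MvPolynomial.eval (f z) h) =
      ∑ b : MIdx r m, C b a * jetFun (f p) b.1 (fun w => MvPolynomial.eval w h)

/-- `π^{-d}` times Lebesgue measure on `ℂ^d` -/
def μE (d : ℕ) : Measure (Fin d → ℂ) := ((ENNReal.ofReal Real.pi) ^ d)⁻¹ • volume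

/-- `e_w(z) = exp⟨z,w⟩` -/
def eW {d : ℕ} (w : Fin d → ℂ) (z : Fin d → ℂ) : ℂ :=
  Complex.exp (∑ i, z i * (starRingEnd ℂ) (w i))

/-- supporting function `h_K` -/
def suppFn {d : ℕ} (K : Set (Fin d → ℂ)) (ζ : Fin d → ℂ) : ℝ :=
  sSup ((fun z => (∑ i, ζ i * (starRingEnd ℂ) (z i)).re) '' K)

/-- polar set `K°` -/
def polarSet {d : ℕ} (K : Set (Fin d → ℂ)) : Set (Fin d → ℂ) :=
  {z | ∀ w ∈ K, ‖∑ i, z i * (starRingEnd ℂ) (w i)‖ ≤ 1}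

/-- membership in the Fock space -/
def MemFock {d : ℕ} (h : (Fin d → ℂ) → ℂ) : Prop :=
  Differentiable ℂ h ∧
    Integrable (fun z => ‖h z‖ ^ 2 * Real.exp (-(∑ i, ‖z i‖ ^ 2))) (μE d)

/-- Fock-space inner product -/
def fockInner {d : ℕ} (h g : (Fin d → ℂ) → ℂ) : ℂ :=
  ∫ z, h z * (starRingEnd ℂ) (g z) * ((Real.exp (-(∑ i, ‖z i‖ ^ 2)) : ℝ) : ℂ) ∂(μE d)

/-- orthogonal projection onto `span{u_{p,α} : |α| ≤ n}`, written out using the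
orthonormal system `u_{p,α}` -/
def jetProj {d : ℕ} (n : ℕ) (p : Fin d → ℂ) (g : (Fin d → ℂ) → ℂ) : (Fin d → ℂ) → ℂ :=
  fun z => ∑ a : MIdx d n, fockInner g (uFn p a.1) * uFn p a.1 z


/-- The `(n+1) × (n+1)` Hankel matrix of the Lebesgue measure on `[a-ρ, a+ρ]`. -/
def hankelMat (a ρ : ℝ) (n : ℕ) : Matrix (Fin (n + 1)) (Fin (n + 1)) ℝ :=
  Matrix.of fun j k => ∫ t in (a - ρ)..(a + ρ), t ^ ((j : ℕ) + (k : ℕ))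

/-!
The integrand `x^(α+β)` factorises over the coordinates, so by Fubini `D_n(μ_Δ)` is the principal
submatrix, indexed by `{|α| ≤ n} ⊆ {0, …, n}^d`, of the Kronecker product `H_1 ⊗ ⋯ ⊗ H_d` of the
one-dimensional Hankel matrices. Each `H_i` is the Gram matrix of the monomials in
`L²[p_i - r_i, p_i + r_i]`, hence `H_i ⪰ λ_i • 1` with `λ_i ≥ 0`. The Schur product theorem gives
`⊗ H_i ⪰ (∏ λ_i) • 1`, and a Loewner bound by a multiple of `1` passes to principal submatrices.
-/

end PFA

namespace Matrix

open scoped ComplexOrder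

section Kronecker

variable {ι 𝕜 : Type*} {κ : ι → Type*} [RCLike 𝕜]

/-- `⊗_{i ∈ s} H i` as a matrix on the full product `∀ i, κ i`: coordinates outside `s` are
ignored. -/
def finsetKronecker (s : Finset ι) (H : ∀ i, Matrix (κ i) (κ i) 𝕜) :
    Matrix (∀ i, κ i) (∀ i, κ i) 𝕜 :=
  of fun a b => ∏ i ∈ s, H i (a i) (b i)

theorem finsetKronecker_insert [DecidableEq ι] {s : Finset ι} {j : ι} (hj : j ∉ s)
    (H : ∀ i, Matrix (κ i) (κ i) 𝕜) :
    finsetKronecker (insert j s) H = (H j).submatrix (· j) (· j) ⊙ finsetKronecker s H := by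
  ext a b
  simp [finsetKronecker, Finset.prod_insert hj]

theorem finsetKronecker_univ_one [Fintype ι] [∀ i, DecidableEq (κ i)] :
    finsetKronecker Finset.univ (fun i => (1 : Matrix (κ i) (κ i) 𝕜)) = 1 := by
  ext a b
  simp only [finsetKronecker, of_apply, one_apply]
  by_cases hab : a = b
  · simp [hab]
  · obtain ⟨i, hi⟩ := Function.ne_iff.mp hab
    rw [if_neg hab]
    exact Finset.prod_eq_zero (Finset.mem_univ i) (if_neg hi)

variable [Finite ι] [∀ i, Finite (κ i)] {s : Finset ι} {H : ∀ i, Matrix (κ i) (κ i) 𝕜}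

theorem posSemidef_finsetKronecker (hH : ∀ i ∈ s, (H i).PosSemidef) :
    (finsetKronecker s H).PosSemidef := by
  classical
  induction s using Finset.induction_on with
  | empty =>
    simpa [finsetKronecker, vecMulVec] using posSemidef_vecMulVec_self_star (1 : (∀ i, κ i) → 𝕜)
  | insert j s hj ih =>
    rw [finsetKronecker_insert hj]
    exact ((hH j (s.mem_insert_self j)).submatrix _).hadamard
      (ih fun i hi => hH i (Finset.mem_insert_of_mem hi))

theorem posSemidef_finsetKronecker_sub_smul [DecidableEq ι] [∀ i, DecidableEq (κ i)]
    {c : ι → ℝ} (hc : ∀ i ∈ s, 0 ≤ c i) (hH : ∀ i ∈ s, (H i - c i • 1).PosSemidef) :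
    (finsetKronecker s H - (∏ i ∈ s, c i) • finsetKronecker s (fun _ => 1)).PosSemidef := by
  induction s using Finset.induction_on with
  | empty =>
    simp only [finsetKronecker, Finset.prod_empty, one_smul, sub_self]
    exact .zero
  | insert j s hj ih =>
    have hc_s i (hi : i ∈ s) := hc i (Finset.mem_insert_of_mem hi)
    have hH_s i (hi : i ∈ s) := hH i (Finset.mem_insert_of_mem hi)
    have hKs : (finsetKronecker s H).PosSemidef := posSemidef_finsetKronecker fun i hi => by
      simpa using (hH_s i hi).add ((PosSemidef.one (R := 𝕜)).smul (hc_s i hi))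
    -- `H ⊗ K - c c' (1 ⊗ 1) = (H - c 1) ⊗ K + c (1 ⊗ (K - c' 1))`, a sum of Schur products
    have hsplit : finsetKronecker (insert j s) H -
          (∏ i ∈ insert j s, c i) • finsetKronecker (insert j s) (fun _ => 1) =
        (H j - c j • 1).submatrix (· j) (· j) ⊙ finsetKronecker s H +
          c j • ((1 : Matrix (κ j) (κ j) 𝕜).submatrix (· j) (· j) ⊙
            (finsetKronecker s H - (∏ i ∈ s, c i) • finsetKronecker s (fun _ => 1))) := by
      ext a b
      simp only [finsetKronecker_insert hj, Finset.prod_insert hj, sub_apply, add_apply,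
        smul_apply, hadamard_apply, submatrix_apply, RCLike.real_smul_eq_coe_mul]
      push_cast
      ring
    rw [hsplit]
    exact (((hH j (s.mem_insert_self j)).submatrix _).hadamard hKs).add
      (((PosSemidef.one.submatrix _).hadamard (ih hc_s hH_s)).smul (hc j (s.mem_insert_self j)))

end Kronecker

variable {ι 𝕜 : Type*} [Fintype ι] [DecidableEq ι] [RCLike 𝕜]

theorem IsHermitian.posSemidef_sub_smul_one_iff {A : Matrix ι ι 𝕜} (hA : A.IsHermitian)
    (c : ℝ) : (A - c • 1).PosSemidef ↔ ∀ k, c ≤ hA.eigenvalues k := by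
  have hc : (c • 1 : Matrix ι ι 𝕜) =
      Unitary.conjStarAlgAut 𝕜 _ hA.eigenvectorUnitary (diagonal fun _ => (c : 𝕜)) := by
    rw [RCLike.real_smul_eq_coe_smul (K := 𝕜), ← smul_one_eq_diagonal, map_smul, map_one]
  conv_lhs => rw [hA.spectral_theorem, hc, ← map_sub, Unitary.conjStarAlgAut_apply,
    Unitary.isUnit_coe.posSemidef_star_right_conjugate_iff, diagonal_sub,
    posSemidef_diagonal_iff]
  simp

theorem mem_spectrum_iff_exists_mulVec_eq_smul {K : Type*} [Field K] (M : Matrix ι ι K) (t : K) :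
    t ∈ spectrum K M ↔ ∃ v : ι → K, v ≠ 0 ∧ M *ᵥ v = t • v := by
  rw [spectrum.mem_iff, isUnit_iff_isUnit_det, isUnit_iff_ne_zero, not_not,
    ← exists_mulVec_eq_zero_iff, Algebra.algebraMap_eq_smul_one]
  simp only [sub_mulVec, smul_mulVec, one_mulVec, sub_eq_zero, eq_comm]

theorem posSemidef_of_integral_mul {α ι : Type*} [Finite ι] [MeasurableSpace α] {μ : Measure α}
    {f : ι → α → ℝ} (hf : ∀ j, MemLp (f j) 2 μ) :
    (of fun j k => ∫ x, f j x * f k x ∂μ).PosSemidef := by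
  have hgram : (of fun j k => ∫ x, f j x * f k x ∂μ) = gram ℝ fun j => (hf j).toLp (f j) := by
    ext j k
    rw [of_apply, gram_apply, L2.inner_def]
    refine integral_congr_ae ?_
    filter_upwards [(hf j).coeFn_toLp, (hf k).coeFn_toLp] with x hj hk
    simp [hj, hk, mul_comm]
  exact hgram ▸ posSemidef_gram ℝ _

theorem submatrix_sub_smul_one {m n α : Type*} [DecidableEq m] [DecidableEq n] [Ring α]
    {e : m → n} (he : Function.Injective e) (A : Matrix n n α) (c : α) :
    (A - c • 1).submatrix e e = A.submatrix e e - c • 1 := by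
  ext a b
  simp [one_apply, he.eq_iff]

end Matrix

namespace PFA

section MinEig

variable {ι : Type*} [Fintype ι] [DecidableEq ι] {M : Matrix ι ι ℝ}

theorem minEig_eq_sInf_spectrum : minEig M = sInf (spectrum ℝ M) := by
  simp only [minEig, ← mem_spectrum_iff_exists_mulVec_eq_smul, Set.ofPred_mem_eq]

theorem le_minEig_iff [Nonempty ι] (hM : M.IsHermitian) (c : ℝ) :
    c ≤ minEig M ↔ (M - c • 1).PosSemidef := by
  rw [minEig_eq_sInf_spectrum, hM.spectrum_real_eq_range_eigenvalues,
    le_csInf_iff (Set.finite_range _).bddBelow (Set.range_nonempty _), Set.forall_mem_range,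
    hM.posSemidef_sub_smul_one_iff]

theorem minEig_nonneg [Nonempty ι] (hM : M.PosSemidef) : 0 ≤ minEig M :=
  (le_minEig_iff hM.isHermitian 0).mpr (by simpa using hM)

end MinEig

theorem hankelMat_eq_integral_Icc {a ρ : ℝ} (hρ : 0 ≤ ρ) (n : ℕ) :
    hankelMat a ρ n =
      of fun j k : Fin (n + 1) => ∫ t in Set.Icc (a - ρ) (a + ρ), t ^ (j : ℕ) * t ^ (k : ℕ) := by
  ext j k
  rw [hankelMat, of_apply, of_apply, intervalIntegral.integral_of_le (by linarith),
    ← integral_Icc_eq_integral_Ioc]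
  simp only [pow_add]

theorem posSemidef_hankelMat {a ρ : ℝ} (hρ : 0 ≤ ρ) (n : ℕ) : (hankelMat a ρ n).PosSemidef := by
  rw [hankelMat_eq_integral_Icc hρ]
  refine posSemidef_of_integral_mul fun j => (memLp_two_iff_integrable_sq (by fun_prop)).mpr ?_
  simp_rw [← pow_mul]
  exact (continuous_pow _).integrableOn_Icc

instance (d n : ℕ) : Nonempty (MIdx d n) := ⟨⟨0, by simp⟩⟩

def MIdx.toFin {d n : ℕ} (a : MIdx d n) : Fin d → Fin (n + 1) :=
  fun i => ⟨a.1 i, Nat.lt_succ_of_le ((Finset.single_le_sum (fun _ _ => Nat.zero_le _)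
    (Finset.mem_univ i)).trans a.2)⟩

theorem MIdx.toFin_injective {d n : ℕ} : Function.Injective (MIdx.toFin (d := d) (n := n)) :=
  fun _ _ h => Subtype.ext <| funext fun i => congrArg Fin.val (congrFun h i)

theorem momentMatrix_restrict_pi_Icc {d : ℕ} (n : ℕ) (p r : Fin d → ℝ) (hr : ∀ i, 0 ≤ r i) :
    momentMatrix d n (volume.restrict (Set.univ.pi fun i => Set.Icc (p i - r i) (p i + r i))) =
      (finsetKronecker Finset.univ fun i => hankelMat (p i) (r i) n).submatrix
        MIdx.toFin MIdx.toFin := by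
  ext a b
  rw [momentMatrix, of_apply, volume_pi, Measure.restrict_pi_pi,
    integral_fintype_prod_eq_prod (f := fun i t => t ^ (a.1 i + b.1 i))]
  simp [finsetKronecker, hankelMat_eq_integral_Icc (hr _), MIdx.toFin, pow_add]

/-- lower bound for the smallest eigenvalue of the moment
matrix of the Lebesgue measure on a rectangle. -/
theorem statement18 (d n : ℕ) (p r : Fin d → ℝ) (hr : ∀ i, 0 < r i) :
    minEig (momentMatrix d n
        (volume.restrict (Set.univ.pi fun i => Set.Icc (p i - r i) (p i + r i)))) ≥
      ∏ i, minEig (hankelMat (p i) (r i) n) := by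
  have hH i : (hankelMat (p i) (r i) n).PosSemidef := posSemidef_hankelMat (hr i).le n
  have hK := posSemidef_finsetKronecker_sub_smul (s := Finset.univ)
    (fun i _ => minEig_nonneg (hH i)) (fun i _ => (le_minEig_iff (hH i).isHermitian _).mp le_rfl)
  rw [finsetKronecker_univ_one] at hK
  have hD := (posSemidef_finsetKronecker (s := Finset.univ) fun i _ => hH i).submatrix MIdx.toFin
  rw [momentMatrix_restrict_pi_Icc n p r fun i => (hr i).le]
  refine (le_minEig_iff hD.isHermitian _).mpr ?_
  rw [← submatrix_sub_smul_one MIdx.toFin_injective]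
  exact hK.submatrix _

end PFA
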